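/- arXiv:0906.4429 — 5 statements merged into one kernel-verified Lean document; each statement's English description precedes it below -/
import Mathlib

section
/- Suppose a rational function f ∈ k̄(t) together with nonzero elements α₁, …, α_s ∈ k̄ and rational functions μ₁, …, μ_s ∈ 𝔽_q(t) (viewed inside k̄(t) via the inclusion 𝔽_q ⊆ k̄) satisfies the σ-difference equation (t − θ)·f^{(-1)} − f = Σ_{i=1}^{s} μ_i · α_i^{(-1)} · (t − θ). Then f is regular at t = θ. -/
/-! Rearranged, the equation reads `f = (t - θ) f⁽⁻¹⁾ - G`, where `G` has coefficients
`μᵢ ∈ 𝔽_q(t)` and is therefore regular at every `θ ^ e`, `e ≥ 1`, because `θ` is transcendental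
over `𝔽_q`. Since `f⁽⁻¹⁾` is regular at `b^{1/q}` whenever `f` is regular at `b`, regularity of `f`
at `θ ^ q ^ (n + 1)` gives regularity at `θ ^ q ^ n`. So a pole of `f` at `θ` would propagate to
poles at all the pairwise distinct points `θ ^ q ^ n`, which the denominator of `f` cannot have. -/

open Polynomial

/-- The ring homomorphism `K(t) → L(t)` applying a field embedding `c : K → L` to all
coefficients of the numerator and denominator of a rational function. -/
noncomputable def RatFunc.coeffMap {K L : Type*} [Field K] [Field L] (c : K →+* L) :
    RatFunc K →+* RatFunc L :=
  RatFunc.mapRingHom (Polynomial.mapRingHom c)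
    (nonZeroDivisors_le_comap_nonZeroDivisors_of_injective _
      (Polynomial.map_injective _ c.injective))

namespace RatFunc

variable {K L : Type*} [Field K] [Field L]

theorem denom_eval_ne_zero_of_eq_div {f : RatFunc K} {a : K} {P Q : K[X]} (hQ : Q.eval a ≠ 0)
    (hf : f = algebraMap K[X] (RatFunc K) P / algebraMap K[X] (RatFunc K) Q) :
    f.denom.eval a ≠ 0 := by
  have hQ0 : Q ≠ 0 := by rintro rfl; simp at hQ
  obtain ⟨R, rfl⟩ := (denom_dvd hQ0).mpr ⟨P, hf⟩
  exact left_ne_zero_of_mul (Polynomial.eval_mul (p := f.denom) ▸ hQ)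

def regularAt (a : K) : Subring (RatFunc K) where
  carrier := {f | f.denom.eval a ≠ 0}
  zero_mem' := by simp
  one_mem' := by simp
  add_mem' {f g} hf hg := by
    refine denom_eval_ne_zero_of_eq_div (P := f.num * g.denom + f.denom * g.num)
      (Q := f.denom * g.denom) (Polynomial.eval_mul (p := f.denom) ▸ mul_ne_zero hf hg) ?_
    rw [map_add, map_mul, map_mul, map_mul, ← div_add_div _ _ (algebraMap_ne_zero f.denom_ne_zero)
      (algebraMap_ne_zero g.denom_ne_zero), num_div_denom, num_div_denom]
  mul_mem' {f g} hf hg := by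
    refine denom_eval_ne_zero_of_eq_div (P := f.num * g.num)
      (Q := f.denom * g.denom) (Polynomial.eval_mul (p := f.denom) ▸ mul_ne_zero hf hg) ?_
    rw [map_mul, map_mul, ← div_mul_div_comm, num_div_denom, num_div_denom]
  neg_mem' {f} hf := by
    refine denom_eval_ne_zero_of_eq_div (P := -f.num) (Q := f.denom) hf ?_
    rw [map_neg, neg_div, num_div_denom]

theorem algebraMap_mem_regularAt (P : K[X]) (a : K) :
    algebraMap K[X] (RatFunc K) P ∈ regularAt a :=
  denom_eval_ne_zero_of_eq_div (P := P) (Q := 1) (by simp) (by simp)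

theorem C_mem_regularAt (b a : K) : C b ∈ regularAt a :=
  algebraMap_C b ▸ algebraMap_mem_regularAt _ a

theorem X_mem_regularAt (a : K) : (X : RatFunc K) ∈ regularAt a :=
  algebraMap_X (K := K) ▸ algebraMap_mem_regularAt _ a

theorem coeffMap_div (c : K →+* L) (P Q : K[X]) :
    coeffMap c (algebraMap K[X] (RatFunc K) P / algebraMap K[X] (RatFunc K) Q) =
      algebraMap L[X] (RatFunc L) (P.map c) / algebraMap L[X] (RatFunc L) (Q.map c) := by
  rw [coeffMap, coe_mapRingHom_eq_coe_map, map_apply_div]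
  rfl

theorem coeffMap_mem_regularAt_of_eval₂_denom_ne_zero {c : K →+* L} {f : RatFunc K} {b : L}
    (h : f.denom.eval₂ c b ≠ 0) : coeffMap c f ∈ regularAt b := by
  rw [← num_div_denom f, coeffMap_div]
  exact denom_eval_ne_zero_of_eq_div (Polynomial.eval_map c _ ▸ h) rfl

theorem coeffMap_mem_regularAt {c : K →+* L} {f : RatFunc K} {a : K} (h : f ∈ regularAt a) :
    coeffMap c f ∈ regularAt (c a) :=
  coeffMap_mem_regularAt_of_eval₂_denom_ne_zero <| by
    rw [Polynomial.eval₂_at_apply]; exact (map_ne_zero c).mpr h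

theorem eval₂_apply_X_pow_ne_zero (A : RatFunc K →+* L) {r : K[X]} (hr : r ≠ 0) {e : ℕ}
    (he : 0 < e) : r.eval₂ (A.comp (algebraMap K (RatFunc K))) (A X ^ e) ≠ 0 := by
  rw [← map_pow, ← Polynomial.hom_eval₂, _root_.map_ne_zero]
  exact fun h => hr (transcendental_iff.mp (transcendental_X.pow he) r h)

theorem apply_X_pow_injective (A : RatFunc K →+* L) : Function.Injective fun n : ℕ => A X ^ n := by
  intro m n h
  simp only at h
  rw [← map_pow, ← map_pow, ← algebraMap_X, ← map_pow, ← map_pow] at h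
  simpa using congrArg Polynomial.natDegree (algebraMap_injective K (A.injective h))

end RatFunc

theorem Polynomial.eval_ne_zero_of_eval_succ_ne_zero {R : Type*} [CommRing R] [IsDomain R]
    {P : R[X]} (hP : P ≠ 0) {u : ℕ → R} (hu : Function.Injective u)
    (h : ∀ n, P.eval (u (n + 1)) ≠ 0 → P.eval (u n) ≠ 0) :
    P.eval (u 0) ≠ 0 := by
  intro h₀
  have hroots : ∀ n, P.IsRoot (u n) := fun n => by
    induction n with
    | zero => exact h₀
    | succ n ih => by_contra hn; exact h n hn ih
  exact Set.infinite_of_injective_forall_mem hu hroots (finite_setOfPred_isRoot hP)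

theorem carlitz_f_regular_at_theta_general
    -- `q = p ^ m` is a prime power and `𝔽_q` is the field with `q` elements
    (p m q : ℕ) [Fact p.Prime] (hm : 0 < m) (hq : q = p ^ m)
    (Fq : Type*) [Field Fq]
    -- `k̄` is an algebraic closure of `k = 𝔽_q(θ)`, and `θ` is the image of the variable
    (kbar : Type*) [Field kbar] [CharP kbar p] [PerfectRing kbar p]
    [Algebra (RatFunc Fq) kbar]
    (θ : kbar) (hθ : θ = algebraMap (RatFunc Fq) kbar RatFunc.X)
    -- `ψ : a ↦ a^{1/q}` is the inverse of the `q`-power Frobenius of `k̄`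
    (ψ : kbar ≃+* kbar) (hψ : ψ = (iterateFrobeniusEquiv kbar p m).symm)
    -- the data `f`, `αᵢ`, `μᵢ`
    (s : ℕ) (α : Fin s → kbar) (μ : Fin s → RatFunc Fq)
    (f : RatFunc kbar)
    -- the σ-difference equation `(t − θ)·f⁽⁻¹⁾ − f = ∑ μᵢ·αᵢ⁽⁻¹⁾·(t − θ)`
    (heq : (RatFunc.X - RatFunc.C θ) * RatFunc.coeffMap (ψ : kbar →+* kbar) f - f =
      ∑ i, RatFunc.coeffMap
          ((algebraMap (RatFunc Fq) kbar).comp (algebraMap Fq (RatFunc Fq))) (μ i) *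
        RatFunc.C (ψ (α i)) * (RatFunc.X - RatFunc.C θ)) :
    -- `f` is regular at `t = θ`: the denominator of `f` in lowest terms does not vanish at `θ`
    Polynomial.eval θ f.denom ≠ 0 := by
  set G := ∑ i, RatFunc.coeffMap
      ((algebraMap (RatFunc Fq) kbar).comp (algebraMap Fq (RatFunc Fq))) (μ i) *
    RatFunc.C (ψ (α i)) * (RatFunc.X - RatFunc.C θ)
  have hq₁ : 1 < q := hq ▸ Nat.one_lt_pow hm.ne' (Fact.out : p.Prime).one_lt
  have hψθ (n : ℕ) : ψ (θ ^ q ^ (n + 1)) = θ ^ q ^ n := by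
    rw [hψ, RingEquiv.symm_apply_eq, iterateFrobeniusEquiv_def, ← hq, ← pow_mul, pow_succ]
  have hG (e : ℕ) (he : 0 < e) : G ∈ RatFunc.regularAt (θ ^ e) :=
    sum_mem fun i _ => mul_mem
      (mul_mem (RatFunc.coeffMap_mem_regularAt_of_eval₂_denom_ne_zero
          (hθ ▸ RatFunc.eval₂_apply_X_pow_ne_zero _ (RatFunc.denom_ne_zero _) he))
        (RatFunc.C_mem_regularAt _ _))
      (sub_mem (RatFunc.X_mem_regularAt _) (RatFunc.C_mem_regularAt _ _))
  have hstep (n : ℕ) (hf : f ∈ RatFunc.regularAt (θ ^ q ^ (n + 1))) :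
      f ∈ RatFunc.regularAt (θ ^ q ^ n) := by
    have hf' : RatFunc.coeffMap (ψ : kbar →+* kbar) f ∈ RatFunc.regularAt (θ ^ q ^ n) :=
      hψθ n ▸ RatFunc.coeffMap_mem_regularAt (c := ψ.toRingHom) hf
    have hf_eq : f = (RatFunc.X - RatFunc.C θ) * RatFunc.coeffMap (ψ : kbar →+* kbar) f - G := by
      rw [← heq]; ring
    rw [hf_eq]
    exact sub_mem (mul_mem (sub_mem (RatFunc.X_mem_regularAt _) (RatFunc.C_mem_regularAt _ _)) hf')
      (hG _ (Nat.pow_pos (by omega)))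
  have hinj : Function.Injective fun n => θ ^ q ^ n :=
    hθ ▸ (RatFunc.apply_X_pow_injective _).comp (Nat.pow_right_injective hq₁)
  simpa using Polynomial.eval_ne_zero_of_eval_succ_ne_zero f.denom_ne_zero hinj hstep

/-- If `f ∈ k̄(t)`, nonzero `α₁, …, α_s ∈ k̄` and `μ₁, …, μ_s ∈ 𝔽_q(t)` satisfy
`(t − θ)·f⁽⁻¹⁾ − f = ∑ μᵢ·αᵢ⁽⁻¹⁾·(t − θ)`, then `f` is regular at `t = θ`. -/
theorem carlitz_f_regular_at_theta
    -- `q = p ^ m` is a prime power and `𝔽_q` is the field with `q` elements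
    (p m q : ℕ) [Fact p.Prime] (hm : 0 < m) (hq : q = p ^ m)
    (Fq : Type*) [Field Fq] [Fintype Fq] [CharP Fq p] (hcard : Fintype.card Fq = q)
    -- `k̄` is an algebraic closure of `k = 𝔽_q(θ)`, and `θ` is the image of the variable
    (kbar : Type*) [Field kbar] [CharP kbar p] [PerfectRing kbar p]
    [Algebra (RatFunc Fq) kbar] [IsAlgClosure (RatFunc Fq) kbar]
    (θ : kbar) (hθ : θ = algebraMap (RatFunc Fq) kbar RatFunc.X)
    -- `ψ : a ↦ a^{1/q}` is the inverse of the `q`-power Frobenius of `k̄`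
    (ψ : kbar ≃+* kbar) (hψ : ψ = (iterateFrobeniusEquiv kbar p m).symm)
    -- the data `f`, `αᵢ`, `μᵢ`
    (s : ℕ) (α : Fin s → kbar) (hα : ∀ i, α i ≠ 0) (μ : Fin s → RatFunc Fq)
    (f : RatFunc kbar)
    -- the σ-difference equation `(t − θ)·f⁽⁻¹⁾ − f = ∑ μᵢ·αᵢ⁽⁻¹⁾·(t − θ)`
    (heq : (RatFunc.X - RatFunc.C θ) * RatFunc.coeffMap (ψ : kbar →+* kbar) f - f =
      ∑ i, RatFunc.coeffMap
          ((algebraMap (RatFunc Fq) kbar).comp (algebraMap Fq (RatFunc Fq))) (μ i) *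
        RatFunc.C (ψ (α i)) * (RatFunc.X - RatFunc.C θ)) :
    -- `f` is regular at `t = θ`: the denominator of `f` in lowest terms does not vanish at `θ`
    Polynomial.eval θ f.denom ≠ 0 :=
  carlitz_f_regular_at_theta_general p m q hm hq Fq kbar θ hθ ψ hψ s α μ f heq
end

section
/- Suppose a rational function f ∈ k̄(t) together with nonzero elements α₁, …, α_s ∈ k̄ and rational functions μ₁, …, μ_s ∈ 𝔽_q(t) (viewed inside k̄(t) via the inclusion 𝔽_q ⊆ k̄) satisfies the σ-difference equation (t − θ)·f^{(-1)} − f = Σ_{i=1}^{s} μ_i · α_i^{(-1)} · (t − θ). Then f is regular at t = θ and its value there vanishes: f(θ) = 0. -/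
/-!
Write `g = f⁽⁻¹⁾` and `T = ∑ μᵢ αᵢ⁽⁻¹⁾`, so that the equation reads `f = (t - θ)(g - T)`,
and `g` has a pole at `b` exactly when `f` has one at `b^q`. The poles of `T` are algebraic
over `𝔽_q`, while `θ` and all its `q^n`-th powers and roots are transcendental. Hence a pole of
`f` at `θ` would propagate to poles at every `θ^{1/q^n}` (at transcendental points other than
`θ`, `f` and `g` have the same poles), and a pole of `g` at `θ` to poles of `f` at every `θ^{q^n}`; but a rational function has
only finitely many poles. So `f` and `g` are regular at `θ`, and `f(θ) = 0 · (g - T)(θ) = 0`.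
-/

open Polynomial

theorem Function.injective_iterate_apply {α : Type*} {f : α → α} (hf : Injective f) {a : α}
    (ha : ∀ n ≠ 0, f^[n] a ≠ a) : Injective (f^[·] a) := by
  intro m n h
  by_contra hmn
  rcases lt_or_gt_of_ne hmn with hlt | hlt
  · exact ha (n - m) (by omega) (iterate_cancel hf h.symm)
  · exact ha (m - n) (by omega) (iterate_cancel hf h)

namespace RatFunc

variable {K L : Type*} [Field K] [Field L]

def RegularAt (a : K) (x : RatFunc K) : Prop := x.denom.eval a ≠ 0

section Regularity

variable {a : K} {x y : RatFunc K}

theorem regularAt_div {p q : K[X]} (hq : q.eval a ≠ 0) :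
    RegularAt a (algebraMap _ _ p / algebraMap _ _ q) :=
  fun h => hq (eval_eq_zero_of_dvd_of_eval_eq_zero (denom_div_dvd p q) h)

theorem regularAt_algebraMap (a : K) (p : K[X]) : RegularAt a (algebraMap _ _ p) := by
  simp [RegularAt]

theorem regularAt_C (a c : K) : RegularAt a (C c) := by
  rw [← algebraMap_C]
  exact regularAt_algebraMap a _

theorem RegularAt.add (hx : RegularAt a x) (hy : RegularAt a y) : RegularAt a (x + y) :=
  fun h => mul_ne_zero hx hy <| by
    rw [← Polynomial.eval_mul]
    exact eval_eq_zero_of_dvd_of_eval_eq_zero (denom_add_dvd x y) h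

theorem RegularAt.mul (hx : RegularAt a x) (hy : RegularAt a y) : RegularAt a (x * y) :=
  fun h => mul_ne_zero hx hy <| by
    rw [← Polynomial.eval_mul]
    exact eval_eq_zero_of_dvd_of_eval_eq_zero (denom_mul_dvd x y) h

theorem RegularAt.neg (hx : RegularAt a x) : RegularAt a (-x) := by
  simpa only [map_neg, neg_div, num_div_denom] using regularAt_div (p := -x.num) hx

theorem RegularAt.sub (hx : RegularAt a x) (hy : RegularAt a y) : RegularAt a (x - y) := by
  rw [sub_eq_add_neg]
  exact hx.add hy.neg

theorem regularAt_sum {ι : Type*} (s : Finset ι) {g : ι → RatFunc K}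
    (hg : ∀ i ∈ s, RegularAt a (g i)) : RegularAt a (∑ i ∈ s, g i) :=
  Finset.sum_induction g (RegularAt a) (fun _ _ => RegularAt.add) (by simp [RegularAt]) hg

theorem finite_setOf_not_regularAt (x : RatFunc K) : {a | ¬RegularAt a x}.Finite := by
  simpa [RegularAt] using finite_setOfPred_isRoot (denom_ne_zero x)

theorem regularAt_of_injective {u : ℕ → K} (hu : Function.Injective u)
    (hx : ∀ n, RegularAt (u (n + 1)) x → RegularAt (u n) x) : RegularAt (u 0) x := by
  by_contra h0
  have hpoles : ∀ n, ¬RegularAt (u n) x := fun n => Nat.rec h0 (fun n ih => mt (hx n) ih) n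
  exact (finite_setOf_not_regularAt x).not_infinite
    (Set.infinite_of_injective_forall_mem hu hpoles)

theorem algebraMap_X_sub_C (θ : K) :
    algebraMap K[X] (RatFunc K) (Polynomial.X - Polynomial.C θ) = X - C θ := by
  simp

theorem regularAt_inv_X_sub_C {θ : K} (ha : a ≠ θ) : RegularAt a (X - C θ)⁻¹ := by
  rw [← algebraMap_X_sub_C, inv_eq_one_div, ← map_one (algebraMap K[X] (RatFunc K))]
  exact regularAt_div (by simpa [sub_eq_zero] using ha)

end Regularity

section CoeffMap

theorem coeffMap_div_s3 (c : K →+* L) (p q : K[X]) :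
    coeffMap c (algebraMap _ _ p / algebraMap _ _ q) =
      algebraMap _ _ (p.map c) / algebraMap _ _ (q.map c) :=
  (congrFun (coe_mapRingHom_eq_coe_map (Polynomial.mapRingHom c) _) _).trans
    (map_apply_div (Polynomial.mapRingHom c) _ p q)

theorem denom_coeffMap (c : K →+* L) (x : RatFunc K) :
    (coeffMap c x).denom = x.denom.map c := by
  set y := coeffMap c x
  have hy : y = algebraMap _ _ (x.num.map c) / algebraMap _ _ (x.denom.map c) := by
    rw [← coeffMap_div_s3, num_div_denom]
  have hD : x.denom.map c ≠ 0 := Polynomial.map_ne_zero (denom_ne_zero x)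
  have hcross : y.num * x.denom.map c = x.num.map c * y.denom := by
    apply IsFractionRing.injective L[X] (RatFunc L)
    rw [map_mul, map_mul, ← div_eq_div_iff (algebraMap_ne_zero (denom_ne_zero y))
      (algebraMap_ne_zero hD), num_div_denom, hy]
  have hdvd : x.denom.map c ∣ y.denom :=
    ((isCoprime_num_denom x).map (Polynomial.mapRingHom c)).symm.dvd_of_dvd_mul_left
      ⟨y.num, by simp only [coe_mapRingHom]; linear_combination -hcross⟩
  exact eq_of_monic_of_associated (monic_denom y) ((monic_denom x).map c)
    (associated_of_dvd_dvd (hy ▸ denom_div_dvd _ _) hdvd)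

theorem regularAt_coeffMap_iff (c : K →+* L) {a : K} {x : RatFunc K} :
    RegularAt (c a) (coeffMap c x) ↔ RegularAt a x := by
  simp only [RegularAt, denom_coeffMap, eval_map, eval₂_at_apply, ne_eq,
    map_eq_zero_iff c c.injective]

end CoeffMap

section DifferenceEquation

variable {e : K ≃+* K} {θ a : K} {T f : RatFunc K}

theorem regularAt_of_regularAt_symm (hf : f = (X - C θ) * (coeffMap (e : K →+* K) f - T))
    (hT : RegularAt a T) (h : RegularAt (e.symm a) f) : RegularAt a f := by
  have hg : RegularAt a (coeffMap (e : K →+* K) f) := by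
    simpa using (regularAt_coeffMap_iff (e : K →+* K)).2 h
  rw [hf, ← algebraMap_X_sub_C]
  exact (regularAt_algebraMap a _).mul (hg.sub hT)

theorem regularAt_symm_of_regularAt (hf : f = (X - C θ) * (coeffMap (e : K →+* K) f - T))
    (ha : a ≠ θ) (hT : RegularAt a T) (h : RegularAt a f) : RegularAt (e.symm a) f := by
  have hX : (X - C θ : RatFunc K) ≠ 0 := by
    rw [← algebraMap_X_sub_C]
    exact algebraMap_ne_zero (X_sub_C_ne_zero θ)
  have hg : coeffMap (e : K →+* K) f = (X - C θ)⁻¹ * f + T := by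
    conv_rhs => rw [hf]
    rw [inv_mul_cancel_left₀ hX, sub_add_cancel]
  rw [← regularAt_coeffMap_iff (e : K →+* K)]
  simpa [hg] using ((regularAt_inv_X_sub_C ha).mul h).add hT

theorem regularAt_and_eval_eq_zero_of_eq_X_sub_C_mul
    (hf : f = (X - C θ) * (coeffMap (e : K →+* K) f - T))
    (hθ : ∀ n ≠ 0, e.symm^[n] θ ≠ θ)
    (hT : ∀ n, RegularAt (e^[n] θ) T) (hT' : ∀ n, RegularAt (e.symm^[n] θ) T) :
    RegularAt θ f ∧ eval (RingHom.id K) θ f = 0 := by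
  have hθ' : ∀ n ≠ 0, e^[n] θ ≠ θ := fun n hn h => hθ n hn <| by
    simpa [h] using (Function.LeftInverse.iterate e.symm_apply_apply n) θ
  have hf_reg : RegularAt θ f :=
    regularAt_of_injective (u := (e^[·] θ)) (Function.injective_iterate_apply e.injective hθ')
      fun n h => by
        simpa [Function.iterate_succ_apply'] using
          regularAt_symm_of_regularAt hf (hθ' (n + 1) n.succ_ne_zero) (hT (n + 1)) h
  have hf_reg_symm : RegularAt (e.symm θ) f :=
    regularAt_of_injective (u := (e.symm^[· + 1] θ))
      ((Function.injective_iterate_apply e.symm.injective hθ).comp (add_left_injective 1))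
      fun n h => regularAt_of_regularAt_symm hf (hT' (n + 1))
        (by rwa [← Function.iterate_succ_apply' e.symm])
  have hg_reg : RegularAt θ (coeffMap (e : K →+* K) f) := by
    simpa using (regularAt_coeffMap_iff (e : K →+* K)).2 hf_reg_symm
  have hX_reg : RegularAt θ (X - C θ) := algebraMap_X_sub_C θ ▸ regularAt_algebraMap θ _
  refine ⟨hf_reg, ?_⟩
  rw [hf, eval_mul (RingHom.id K) θ hX_reg (hg_reg.sub (by simpa using hT' 0)),
    ← algebraMap_X_sub_C, eval_algebraMap]
  simp

end DifferenceEquation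

end RatFunc

section Transcendence

variable {F L : Type*} [Field F] [Field L]

theorem eval₂_algebraMap_X_ne_zero [Algebra (RatFunc F) L] {P : F[X]} (hP : P ≠ 0) :
    P.eval₂ ((algebraMap (RatFunc F) L).comp (algebraMap F (RatFunc F)))
      (algebraMap (RatFunc F) L RatFunc.X) ≠ 0 := by
  rw [← hom_eval₂, IsScalarTower.algebraMap_eq F F[X] (RatFunc F), ← RatFunc.algebraMap_X,
    ← hom_eval₂, Polynomial.algebraMap_eq, eval₂_C_X]
  exact (_root_.map_ne_zero _).2 (RatFunc.algebraMap_ne_zero hP)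

variable (ι : F →+* L)

theorem eval₂_iterate_ne_zero {σ : L →+* L} (hσ : σ.comp ι = ι) {x : L}
    (hx : ∀ P : F[X], P ≠ 0 → P.eval₂ ι x ≠ 0) (n : ℕ) :
    ∀ P : F[X], P ≠ 0 → P.eval₂ ι (σ^[n] x) ≠ 0 := by
  induction n with
  | zero => exact hx
  | succ n ih =>
    intro P hP
    rw [Function.iterate_succ_apply', ← hσ, ← hom_eval₂]
    exact (_root_.map_ne_zero σ).2 (ih P hP)

theorem pow_pow_ne_self {x : L} (hx : ∀ P : F[X], P ≠ 0 → P.eval₂ ι x ≠ 0) {q : ℕ} (hq : 1 < q)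
    {n : ℕ} (hn : n ≠ 0) : x ^ q ^ n ≠ x := by
  simpa [sub_eq_zero] using hx _ (FiniteField.X_pow_card_pow_sub_X_ne_zero F hn hq)

theorem RatFunc.regularAt_coeffMap_of_forall_eval₂_ne_zero {a : L}
    (ha : ∀ P : F[X], P ≠ 0 → P.eval₂ ι a ≠ 0) (μ : RatFunc F) :
    (RatFunc.coeffMap ι μ).RegularAt a := by
  rw [RatFunc.RegularAt, RatFunc.denom_coeffMap, eval_map]
  exact ha _ (RatFunc.denom_ne_zero μ)

theorem iterateFrobenius_comp_eq_of_card_eq [Fintype F] {p m : ℕ} [ExpChar L p]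
    (hcard : Fintype.card F = p ^ m) : (iterateFrobenius L p m).comp ι = ι := by
  ext c
  simp [iterateFrobenius_def, ← map_pow, ← hcard, FiniteField.pow_card]

end Transcendence

theorem carlitz_f_vanishes_at_theta_general
    -- `q = p ^ m` is a prime power and `𝔽_q` is the field with `q` elements
    (p m q : ℕ) [Fact p.Prime] (hq : q = p ^ m)
    (Fq : Type*) [Field Fq] [Fintype Fq] (hcard : Fintype.card Fq = q)
    -- `k̄` is an algebraic closure of `k = 𝔽_q(θ)`, and `θ` is the image of the variable
    (kbar : Type*) [Field kbar] [CharP kbar p] [PerfectRing kbar p]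
    [Algebra (RatFunc Fq) kbar]
    (θ : kbar) (hθ : θ = algebraMap (RatFunc Fq) kbar RatFunc.X)
    -- `ψ : a ↦ a^{1/q}` is the inverse of the `q`-power Frobenius of `k̄`
    (ψ : kbar ≃+* kbar) (hψ : ψ = (iterateFrobeniusEquiv kbar p m).symm)
    -- the data `f`, `αᵢ`, `μᵢ`
    (s : ℕ) (α : Fin s → kbar) (μ : Fin s → RatFunc Fq)
    (f : RatFunc kbar)
    -- the σ-difference equation `(t − θ)·f⁽⁻¹⁾ − f = ∑ μᵢ·αᵢ⁽⁻¹⁾·(t − θ)`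
    (heq : (RatFunc.X - RatFunc.C θ) * RatFunc.coeffMap (ψ : kbar →+* kbar) f - f =
      ∑ i, RatFunc.coeffMap
          ((algebraMap (RatFunc Fq) kbar).comp (algebraMap Fq (RatFunc Fq))) (μ i) *
        RatFunc.C (ψ (α i)) * (RatFunc.X - RatFunc.C θ)) :
    -- `f` is regular at `t = θ` and its value there vanishes
    Polynomial.eval θ f.denom ≠ 0 ∧ RatFunc.eval (RingHom.id kbar) θ f = 0 := by
  subst hq hψ
  set ι := (algebraMap (RatFunc Fq) kbar).comp (algebraMap Fq (RatFunc Fq))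
  set Frob := iterateFrobeniusEquiv kbar p m
  have hf : f = (RatFunc.X - RatFunc.C θ) * (RatFunc.coeffMap (Frob.symm : kbar →+* kbar) f -
      ∑ i, RatFunc.coeffMap ι (μ i) * RatFunc.C (Frob.symm (α i))) := by
    rw [← Finset.sum_mul] at heq
    linear_combination -heq
  set T := ∑ i, RatFunc.coeffMap ι (μ i) * RatFunc.C (Frob.symm (α i))
  have hθ_tr : ∀ P : Fq[X], P ≠ 0 → P.eval₂ ι θ ≠ 0 := hθ ▸ fun P => eval₂_algebraMap_X_ne_zero
  have hFrob : (Frob : kbar →+* kbar).comp ι = ι := iterateFrobenius_comp_eq_of_card_eq ι hcard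
  have hFrob_symm : (Frob.symm : kbar →+* kbar).comp ι = ι := by
    ext c
    exact Frob.symm_apply_eq.2 (RingHom.congr_fun hFrob c).symm
  have hT : ∀ a : kbar, (∀ P : Fq[X], P ≠ 0 → P.eval₂ ι a ≠ 0) → T.RegularAt a :=
    fun a ha => RatFunc.regularAt_sum _ fun i _ =>
      (RatFunc.regularAt_coeffMap_of_forall_eval₂_ne_zero ι ha (μ i)).mul
        (RatFunc.regularAt_C a _)
  refine RatFunc.regularAt_and_eval_eq_zero_of_eq_X_sub_C_mul (e := Frob.symm) hf
    (fun n hn => ?_) (fun n => hT _ (eval₂_iterate_ne_zero ι hFrob_symm hθ_tr n))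
    (fun n => hT _ (eval₂_iterate_ne_zero ι hFrob hθ_tr n))
  have hiter : (⇑Frob)^[n] θ = θ ^ (p ^ m) ^ n := by
    rw [show ⇑Frob = (· ^ p ^ m) from funext (iterateFrobeniusEquiv_def kbar p m), pow_iterate]
  simpa [hiter] using pow_pow_ne_self ι hθ_tr (hcard ▸ Fintype.one_lt_card) hn

/-- If `f ∈ k̄(t)`, nonzero `α₁, …, α_s ∈ k̄` and `μ₁, …, μ_s ∈ 𝔽_q(t)` satisfy
`(t − θ)·f⁽⁻¹⁾ − f = ∑ μᵢ·αᵢ⁽⁻¹⁾·(t − θ)`, then `f` is regular at `t = θ` and `f(θ) = 0`. -/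
theorem carlitz_f_vanishes_at_theta
    -- `q = p ^ m` is a prime power and `𝔽_q` is the field with `q` elements
    (p m q : ℕ) [Fact p.Prime] (hm : 0 < m) (hq : q = p ^ m)
    (Fq : Type*) [Field Fq] [Fintype Fq] [CharP Fq p] (hcard : Fintype.card Fq = q)
    -- `k̄` is an algebraic closure of `k = 𝔽_q(θ)`, and `θ` is the image of the variable
    (kbar : Type*) [Field kbar] [CharP kbar p] [PerfectRing kbar p]
    [Algebra (RatFunc Fq) kbar] [IsAlgClosure (RatFunc Fq) kbar]
    (θ : kbar) (hθ : θ = algebraMap (RatFunc Fq) kbar RatFunc.X)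
    -- `ψ : a ↦ a^{1/q}` is the inverse of the `q`-power Frobenius of `k̄`
    (ψ : kbar ≃+* kbar) (hψ : ψ = (iterateFrobeniusEquiv kbar p m).symm)
    -- the data `f`, `αᵢ`, `μᵢ`
    (s : ℕ) (α : Fin s → kbar) (hα : ∀ i, α i ≠ 0) (μ : Fin s → RatFunc Fq)
    (f : RatFunc kbar)
    -- the σ-difference equation `(t − θ)·f⁽⁻¹⁾ − f = ∑ μᵢ·αᵢ⁽⁻¹⁾·(t − θ)`
    (heq : (RatFunc.X - RatFunc.C θ) * RatFunc.coeffMap (ψ : kbar →+* kbar) f - f =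
      ∑ i, RatFunc.coeffMap
          ((algebraMap (RatFunc Fq) kbar).comp (algebraMap Fq (RatFunc Fq))) (μ i) *
        RatFunc.C (ψ (α i)) * (RatFunc.X - RatFunc.C θ)) :
    -- `f` is regular at `t = θ` and its value there vanishes
    Polynomial.eval θ f.denom ≠ 0 ∧ RatFunc.eval (RingHom.id kbar) θ f = 0 :=
  carlitz_f_vanishes_at_theta_general p m q hq Fq hcard kbar θ hθ ψ hψ s α μ f heq
end

section
/- The only rational function f ∈ k̄(t) satisfying the homogeneous σ-difference equation (t − θ)·f^{(-1)} = f is f = 0. -/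
open Polynomial

/-! Comparing the degrees of both sides shows that `a * f⁽⁻¹⁾ = f` has no nonzero solution
as soon as `deg a ≠ 0`: twisting the coefficients of `f` by a field embedding does not change
`deg f = deg num - deg denom`, while multiplying by `a` shifts it by `deg a`. -/

namespace RatFunc

variable {K L : Type*} [Field K] [Field L]

theorem intDegree_algebraMap_div {p q : K[X]} (hp : p ≠ 0) (hq : q ≠ 0) :
    intDegree (algebraMap K[X] (RatFunc K) p / algebraMap K[X] (RatFunc K) q) =
      (p.natDegree : ℤ) - q.natDegree := by
  rw [intDegree_div (algebraMap_ne_zero hp) (algebraMap_ne_zero hq), intDegree_polynomial,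
    intDegree_polynomial]

theorem coeffMap_algebraMap_div (c : K →+* L) (p q : K[X]) :
    coeffMap c (algebraMap K[X] (RatFunc K) p / algebraMap K[X] (RatFunc K) q) =
      algebraMap L[X] (RatFunc L) (p.map c) / algebraMap L[X] (RatFunc L) (q.map c) :=
  map_apply_div _ (nonZeroDivisors_le_comap_nonZeroDivisors_of_injective _
    (Polynomial.map_injective _ c.injective)) p q

theorem intDegree_coeffMap (c : K →+* L) (f : RatFunc K) :
    intDegree (coeffMap c f) = intDegree f := by
  rcases eq_or_ne f 0 with rfl | hf
  · simp
  have map_ne_zero {p : K[X]} (hp : p ≠ 0) : p.map c ≠ 0 :=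
    (Polynomial.map_ne_zero_iff c.injective).mpr hp
  rw [← num_div_denom f, coeffMap_algebraMap_div,
    intDegree_algebraMap_div (map_ne_zero (num_ne_zero hf)) (map_ne_zero f.denom_ne_zero),
    intDegree_algebraMap_div (num_ne_zero hf) f.denom_ne_zero,
    natDegree_map_eq_of_injective c.injective, natDegree_map_eq_of_injective c.injective]

theorem intDegree_X_sub_C (a : K) : intDegree (X - C a : RatFunc K) = 1 := by
  rw [← algebraMap_X, ← algebraMap_C, ← map_sub, intDegree_polynomial, natDegree_X_sub_C,
    Nat.cast_one]

theorem eq_zero_of_mul_coeffMap_eq (c : K →+* K) {a f : RatFunc K} (ha : intDegree a ≠ 0)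
    (h : a * coeffMap c f = f) : f = 0 := by
  by_contra hf
  have ha₀ : a ≠ 0 := by
    rintro rfl
    exact ha intDegree_zero
  have hcf : coeffMap c f ≠ 0 := (map_ne_zero_iff _ (coeffMap c).injective).mpr hf
  have hdeg := congrArg intDegree h
  rw [intDegree_mul ha₀ hcf, intDegree_coeffMap] at hdeg
  omega

end RatFunc

theorem carlitz_homogeneous_equation_trivial_general
    -- `k̄` is an algebraic closure of `k = 𝔽_q(θ)`, and `θ` is the image of the variable
    (kbar : Type*) [Field kbar]
    (θ : kbar)
    -- `ψ : a ↦ a^{1/q}` is the inverse of the `q`-power Frobenius of `k̄`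
    (ψ : kbar ≃+* kbar)
    (f : RatFunc kbar)
    -- the homogeneous σ-difference equation `(t − θ)·f⁽⁻¹⁾ = f`
    (heq : (RatFunc.X - RatFunc.C θ) * RatFunc.coeffMap (ψ : kbar →+* kbar) f = f) :
    f = 0 :=
  RatFunc.eq_zero_of_mul_coeffMap_eq _ (by rw [RatFunc.intDegree_X_sub_C]; exact one_ne_zero) heq

/-- The only rational function `f ∈ k̄(t)` satisfying the homogeneous σ-difference equation
`(t − θ)·f⁽⁻¹⁾ = f` is `f = 0`. -/
theorem carlitz_homogeneous_equation_trivial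
    -- `q = p ^ m` is a prime power and `𝔽_q` is the field with `q` elements
    (p m q : ℕ) [Fact p.Prime] (hm : 0 < m) (hq : q = p ^ m)
    (Fq : Type*) [Field Fq] [Fintype Fq] [CharP Fq p] (hcard : Fintype.card Fq = q)
    -- `k̄` is an algebraic closure of `k = 𝔽_q(θ)`, and `θ` is the image of the variable
    (kbar : Type*) [Field kbar] [CharP kbar p] [PerfectRing kbar p]
    [Algebra (RatFunc Fq) kbar] [IsAlgClosure (RatFunc Fq) kbar]
    (θ : kbar) (hθ : θ = algebraMap (RatFunc Fq) kbar RatFunc.X)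
    -- `ψ : a ↦ a^{1/q}` is the inverse of the `q`-power Frobenius of `k̄`
    (ψ : kbar ≃+* kbar) (hψ : ψ = (iterateFrobeniusEquiv kbar p m).symm)
    (f : RatFunc kbar)
    -- the homogeneous σ-difference equation `(t − θ)·f⁽⁻¹⁾ = f`
    (heq : (RatFunc.X - RatFunc.C θ) * RatFunc.coeffMap (ψ : kbar →+* kbar) f = f) :
    f = 0 :=
  carlitz_homogeneous_equation_trivial_general kbar θ ψ f heq
end

section
/- Let R be a ring, U an R-module, and Y ⊆ U a submodule which is semisimple as an R-module. If W₁ and W₂ are submodules of Y such that each natural quotient map U/Wᵢ → U/Y (i = 1, 2) admits an R-linear section, then the natural quotient map U/(W₁ ∩ W₂) → U/Y also admits an R-linear section. -/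
/-- For submodules `W ≤ Y` of an `R`-module `U`, this says that the natural quotient map
`U/W → U/Y` admits an `R`-linear section. -/
def QuotMapHasSection {R U : Type*} [Ring R] [AddCommGroup U] [Module R U]
    (W Y : Submodule R U) (h : W ≤ Y) : Prop :=
  ∃ s : (U ⧸ Y) →ₗ[R] U ⧸ W,
    (Submodule.mapQ W Y LinearMap.id h) ∘ₗ s = LinearMap.id

/-!
A section of `U/W → U/Y` is the same as a submodule `C` of `U` with `C ⊓ Y = W` and
`C ⊔ Y = ⊤` (the preimage of its range). Given such `C₁`, `C₂` for `W₁`, `W₂`, and a complement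
`B` of `W₁ ⊔ W₂` inside the semisimple module `Y`, the modular law shows that
`C₁ ⊓ (C₂ ⊔ B)` does the same job for `W₁ ⊓ W₂`.
-/

section ModularLattice

variable {α : Type*} [Lattice α] [IsModularLattice α] {Y W₁ W₂ C₁ C₂ B : α}

theorem inf_sup_inf_eq_inf_of_disjoint [OrderBot α] (hB : Disjoint (W₁ ⊔ W₂) B) (hBY : B ≤ Y)
    (hC₁ : C₁ ⊓ Y = W₁) (hC₂ : C₂ ⊓ Y = W₂) : C₁ ⊓ (C₂ ⊔ B) ⊓ Y = W₁ ⊓ W₂ := by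
  have hC₂B_inf : (C₂ ⊔ B) ⊓ Y = W₂ ⊔ B := by
    rw [sup_comm, sup_inf_assoc_of_le _ hBY, hC₂, sup_comm]
  have hW₁_inf_le : W₁ ⊓ (W₂ ⊔ B) ≤ W₂ := calc
    W₁ ⊓ (W₂ ⊔ B) ≤ (W₂ ⊔ B) ⊓ (W₁ ⊔ W₂) := inf_comm W₁ _ ▸ inf_le_inf_left _ le_sup_left
    _ = W₂ ⊔ B ⊓ (W₁ ⊔ W₂) := sup_inf_assoc_of_le _ le_sup_right
    _ = W₂ := by rw [hB.symm.eq_bot, sup_bot_eq]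
  calc C₁ ⊓ (C₂ ⊔ B) ⊓ Y = W₁ ⊓ ((C₂ ⊔ B) ⊓ Y) := by rw [← hC₁]; ac_rfl
    _ = W₁ ⊓ W₂ := by
      rw [hC₂B_inf]
      exact le_antisymm (le_inf inf_le_left hW₁_inf_le) (inf_le_inf_left _ le_sup_left)

theorem inf_sup_sup_eq_top_of_le_sup [OrderTop α] (hY : Y ≤ W₁ ⊔ W₂ ⊔ B)
    (hW₁ : W₁ ≤ C₁ ⊓ Y) (hW₂ : W₂ ≤ C₂) (hC₁ : C₁ ⊔ Y = ⊤) (hC₂ : C₂ ⊔ Y = ⊤) :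
    C₁ ⊓ (C₂ ⊔ B) ⊔ Y = ⊤ := by
  have hC₂BW₁ : C₂ ⊔ B ⊔ W₁ = ⊤ := by
    refine eq_top_iff.2 (hC₂ ▸ sup_le (le_sup_of_le_left le_sup_left) (hY.trans ?_))
    exact sup_le (sup_le le_sup_right (le_sup_of_le_left (le_sup_of_le_left hW₂)))
      (le_sup_of_le_left le_sup_right)
  have hC₁_eq : C₁ ⊓ (C₂ ⊔ B) ⊔ W₁ = C₁ := by
    rw [inf_sup_assoc_of_le _ (hW₁.trans inf_le_left), hC₂BW₁, inf_top_eq]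
  calc C₁ ⊓ (C₂ ⊔ B) ⊔ Y = C₁ ⊓ (C₂ ⊔ B) ⊔ W₁ ⊔ Y := by
        rw [sup_assoc, sup_eq_right.2 (hW₁.trans inf_le_right)]
    _ = ⊤ := by rw [hC₁_eq, hC₁]

end ModularLattice

section Sections

open Submodule

variable {R U : Type*} [Ring R] [AddCommGroup U] [Module R U] {W Y : Submodule R U}

theorem Submodule.exists_disjoint_sup_eq_of_le [IsSemisimpleModule R Y] {V : Submodule R U}
    (hV : V ≤ Y) : ∃ B ≤ Y, Disjoint V B ∧ V ⊔ B = Y := by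
  have := Y.mapIic.complementedLattice_iff.1 inferInstance
  obtain ⟨B, hBY, hVB, hVB'⟩ := Set.Iic.complementedLattice_iff.1 this V hV
  exact ⟨B, hBY, disjoint_iff.2 hVB, hVB'⟩

theorem QuotMapHasSection.exists_inf_eq_sup_eq_top {h : W ≤ Y} (hs : QuotMapHasSection W Y h) :
    ∃ C : Submodule R U, C ⊓ Y = W ∧ C ⊔ Y = ⊤ := by
  obtain ⟨s, hs⟩ := hs
  have hs' : ∀ x, mapQ W Y LinearMap.id h (s x) = x := LinearMap.congr_fun hs
  refine ⟨(LinearMap.range s).comap W.mkQ, le_antisymm ?_ (le_inf ?_ h), ?_⟩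
  · rintro u ⟨⟨x, hx⟩, hu⟩
    have hx0 : x = 0 := by
      rw [← hs' x, hx]
      exact (Submodule.Quotient.mk_eq_zero Y).2 hu
    rw [hx0, map_zero, eq_comm] at hx
    exact (Submodule.Quotient.mk_eq_zero W).1 hx
  · intro u hu
    exact ⟨0, by simp [(Submodule.Quotient.mk_eq_zero W).2 hu]⟩
  · refine eq_top_iff.2 fun u _ ↦ ?_
    obtain ⟨v, hv⟩ := W.mkQ_surjective (s (Y.mkQ u))
    have hvu : Y.mkQ u = Y.mkQ v := by rw [← hs' (Y.mkQ u), ← hv]; rfl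
    exact mem_sup.2 ⟨v, ⟨_, hv.symm⟩, u - v, (Submodule.Quotient.eq Y).1 hvu, add_sub_cancel _ _⟩

theorem quotMapHasSection_of_inf_eq_of_sup_eq_top {h : W ≤ Y} {C : Submodule R U}
    (hCY : C ⊓ Y = W) (hCY' : C ⊔ Y = ⊤) : QuotMapHasSection W Y h := by
  let C' := C.map W.mkQ
  have hbij : Function.Bijective (mapQ W Y LinearMap.id h ∘ₗ C'.subtype) := by
    constructor
    · rw [← LinearMap.ker_eq_bot, eq_bot_iff]
      rintro ⟨_, u, hu, rfl⟩ hq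
      have huY : u ∈ Y := (Submodule.Quotient.mk_eq_zero Y).1 hq
      have huW : u ∈ W := hCY ▸ ⟨hu, huY⟩
      exact (mem_bot R).2 (Subtype.ext ((Submodule.Quotient.mk_eq_zero W).2 huW))
    · intro x
      obtain ⟨u, rfl⟩ := Y.mkQ_surjective x
      obtain ⟨c, hc, y, hy, rfl⟩ := mem_sup.1 (hCY' ▸ mem_top : u ∈ C ⊔ Y)
      refine ⟨⟨W.mkQ c, c, hc, rfl⟩, (Submodule.Quotient.eq Y).2 ?_⟩
      rw [LinearMap.id_apply, sub_add_cancel_left]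
      exact neg_mem hy
  let e := LinearEquiv.ofBijective _ hbij
  exact ⟨C'.subtype ∘ₗ e.symm, LinearMap.ext e.apply_symm_apply⟩

end Sections

/-- Let `Y ⊆ U` be a submodule which is semisimple as an `R`-module.  If `W₁, W₂ ⊆ Y` are
submodules such that each natural quotient map `U/Wᵢ → U/Y` admits an `R`-linear section,
then so does the natural quotient map `U/(W₁ ∩ W₂) → U/Y`. -/
theorem quotMapHasSection_inf {R U : Type*} [Ring R] [AddCommGroup U] [Module R U]
    (Y : Submodule R U) (hY : IsSemisimpleModule R Y)
    (W₁ W₂ : Submodule R U) (h₁ : W₁ ≤ Y) (h₂ : W₂ ≤ Y)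
    (hs₁ : QuotMapHasSection W₁ Y h₁) (hs₂ : QuotMapHasSection W₂ Y h₂) :
    QuotMapHasSection (W₁ ⊓ W₂) Y (le_trans inf_le_left h₁) := by
  obtain ⟨C₁, hC₁, hC₁'⟩ := hs₁.exists_inf_eq_sup_eq_top
  obtain ⟨C₂, hC₂, hC₂'⟩ := hs₂.exists_inf_eq_sup_eq_top
  obtain ⟨B, hBY, hB, hB'⟩ := Submodule.exists_disjoint_sup_eq_of_le (sup_le h₁ h₂)
  exact quotMapHasSection_of_inf_eq_of_sup_eq_top
    (inf_sup_inf_eq_inf_of_disjoint hB hBY hC₁ hC₂)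
    (inf_sup_sup_eq_top_of_le_sup hB'.ge hC₁.ge (hC₂.ge.trans inf_le_left) hC₁' hC₂')
end

section
/- Let R be a ring, U an R-module, and Y ⊆ U a submodule which is semisimple and of finite length as an R-module. Then there exists a smallest submodule V ⊆ Y such that the natural quotient map U/V → U/Y admits an R-linear section; that is, V has this splitting property and V is contained in every submodule W ⊆ Y for which U/W → U/Y admits an R-linear section. -/
/-!
A section of `U/W → U/Y` amounts to a complement of `Y/W` in `U/W`, i.e. a submodule `C` with
`C + Y = U` and `C ∩ Y = W`: a complement of `Y` above `W`. In the modular lattice of submodules,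
the `W` admitting such a complement are closed under `⊓` as soon as every interval `[W', Y]` is
complemented, which is what semisimplicity of `Y` provides: given complements `C` above `W` and
`C'` above `W'`, enlarging `C'` by a relative complement of `W ⊔ W'` in `[W', Y]` gives a
complement `C₀` of `W ⊔ W'` above `W'`, and then `C ⊓ C₀` is a complement of `Y` above `W ⊓ W'`.
As `Y` is Artinian, a minimal such `W` exists, and closure under `⊓` makes it the smallest.
-/

def IsComplAbove {α : Type*} [Lattice α] [OrderTop α] (w y c : α) : Prop :=
  c ⊔ y = ⊤ ∧ c ⊓ y = w

theorem IsComplAbove.le {α : Type*} [Lattice α] [OrderTop α] {w y c : α}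
    (h : IsComplAbove w y c) : w ≤ y :=
  h.2 ▸ inf_le_right

section ModularLattice

variable {α : Type*} [Lattice α] [IsModularLattice α]

theorem exists_relCompl_of_complementedLattice_Iic [OrderBot α] {a b c : α}
    [ComplementedLattice (Set.Iic c)] (hab : a ≤ b) (hbc : b ≤ c) :
    ∃ d ≤ c, b ⊔ d = c ∧ b ⊓ d = a := by
  obtain ⟨e, hec, hbe, hbe'⟩ := Set.Iic.complementedLattice_iff.mp ‹_› b hbc
  refine ⟨e ⊔ a, sup_le hec (hab.trans hbc), ?_, ?_⟩
  · rw [← sup_assoc, hbe', sup_eq_left.mpr (hab.trans hbc)]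
  · rw [inf_comm, sup_comm, sup_inf_assoc_of_le e hab, inf_comm, hbe, sup_bot_eq]

variable [OrderTop α] {w w' y c c' s t : α}

theorem IsComplAbove.sup_of_relCompl (h : IsComplAbove w y c) (hst : s ⊔ t = y)
    (hst' : s ⊓ t = w) : IsComplAbove w s (c ⊔ t) := by
  have hty : t ≤ y := hst ▸ le_sup_right
  have hsy : s ≤ y := hst ▸ le_sup_left
  refine ⟨by rw [sup_assoc, sup_comm t, hst, h.1], ?_⟩
  calc (c ⊔ t) ⊓ s = (c ⊔ t) ⊓ y ⊓ s := by rw [inf_assoc, inf_eq_right.mpr hsy]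
    _ = t ⊓ s := by
      rw [sup_comm, sup_inf_assoc_of_le c hty, h.2, sup_eq_left.mpr (hst' ▸ inf_le_right)]
    _ = w := by rw [inf_comm, hst']

theorem IsComplAbove.inf (h : IsComplAbove w y c) (h' : IsComplAbove w' (w ⊔ w') c') :
    IsComplAbove (w ⊓ w') y (c ⊓ c') := by
  have hwc : w ≤ c := h.2 ▸ inf_le_left
  have hwc' : w' ≤ c' := h'.2 ▸ inf_le_left
  have hc : c = c ⊓ c' ⊔ w :=
    calc c = c ⊓ (c' ⊔ (w ⊔ w')) := by rw [h'.1, inf_top_eq]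
      _ = c ⊓ (c' ⊔ w) := by rw [sup_comm w, ← sup_assoc, sup_eq_left.mpr hwc']
      _ = c ⊓ c' ⊔ w := by rw [inf_comm, sup_comm, sup_inf_assoc_of_le c' hwc, inf_comm, sup_comm]
  constructor
  · calc c ⊓ c' ⊔ y = c ⊓ c' ⊔ w ⊔ y := by rw [sup_assoc, sup_eq_right.mpr h.le]
      _ = ⊤ := by rw [← hc, h.1]
  · calc c ⊓ c' ⊓ y = w ⊓ c' := by rw [inf_right_comm, h.2]
      _ = w ⊓ ((w ⊔ w') ⊓ c') := by rw [← inf_assoc, inf_sup_self]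
      _ = w ⊓ w' := by rw [inf_comm _ c', h'.2]

theorem infClosed_setOf_isComplAbove [OrderBot α] [ComplementedLattice (Set.Iic y)] :
    InfClosed {w | ∃ c, IsComplAbove w y c} := by
  rintro w ⟨c, hc⟩ w' ⟨c', hc'⟩
  obtain ⟨t, -, hst, hst'⟩ :=
    exists_relCompl_of_complementedLattice_Iic (le_sup_right : w' ≤ w ⊔ w') (sup_le hc.le hc'.le)
  exact ⟨_, hc.inf (hc'.sup_of_relCompl hst hst')⟩

end ModularLattice

theorem InfClosed.exists_isLeast_of_subset_Iic {α : Type*} [SemilatticeInf α] {s : Set α} {b : α}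
    [WellFoundedLT (Set.Iic b)] (hs : InfClosed s) (hsb : s ⊆ Set.Iic b) (hne : s.Nonempty) :
    ∃ a, IsLeast s a := by
  obtain ⟨x, hx⟩ := hne
  obtain ⟨m, hm⟩ :=
    exists_minimal_of_wellFoundedLT (fun a : Set.Iic b ↦ (a : α) ∈ s) ⟨⟨x, hsb hx⟩, hx⟩
  refine ⟨m, hm.prop, fun y hy ↦ ?_⟩
  have hmy : ((m : α) ⊓ y) ∈ s := hs hm.prop hy
  have := hm.eq_of_le (y := ⟨m ⊓ y, inf_le_left.trans m.2⟩) hmy inf_le_left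
  exact inf_eq_left.mp (congrArg Subtype.val this)

section Quotient

open Submodule

variable {R U : Type*} [Ring R] [AddCommGroup U] [Module R U] {W Y : Submodule R U}

theorem QuotMapHasSection.exists_isComplAbove {hWY : W ≤ Y} (h : QuotMapHasSection W Y hWY) :
    ∃ C, IsComplAbove W Y C := by
  obtain ⟨s, hs⟩ := h
  have hs' (z : U ⧸ Y) : mapQ W Y LinearMap.id hWY (s z) = z := LinearMap.congr_fun hs z
  refine ⟨(LinearMap.range s).comap W.mkQ, eq_top_iff.mpr fun u _ ↦ ?_, le_antisymm ?_ ?_⟩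
  · obtain ⟨v, hv⟩ := W.mkQ_surjective (s (Y.mkQ u))
    have hvu : Y.mkQ v = Y.mkQ u := by rw [← hs' (Y.mkQ u), ← hv]; rfl
    have huv : u - v ∈ Y := (Submodule.Quotient.eq Y).mp hvu.symm
    exact mem_sup.mpr ⟨v, ⟨_, hv.symm⟩, u - v, huv, add_sub_cancel _ _⟩
  · rintro u ⟨⟨z, hz⟩, huY⟩
    have hz0 : z = 0 := by
      rw [← hs' z, hz, mkQ_apply, mapQ_apply, LinearMap.id_apply, Submodule.Quotient.mk_eq_zero]
      exact huY
    rw [← Submodule.Quotient.mk_eq_zero, ← mkQ_apply, ← hz, hz0, map_zero]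
  · refine le_inf (fun w hw ↦ ⟨0, ?_⟩) hWY
    rw [map_zero, mkQ_apply, eq_comm, Submodule.Quotient.mk_eq_zero]
    exact hw

theorem IsComplAbove.quotMapHasSection {C : Submodule R U} (hC : IsComplAbove W Y C) :
    QuotMapHasSection W Y hC.le := by
  set g : C →ₗ[R] U ⧸ Y := Y.mkQ ∘ₗ C.subtype
  have hg : Function.Surjective g := by
    intro z
    obtain ⟨u, rfl⟩ := Y.mkQ_surjective z
    obtain ⟨c, hc, y, hy, rfl⟩ := mem_sup.mp (hC.1 ▸ mem_top : u ∈ C ⊔ Y)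
    refine ⟨⟨c, hc⟩, ?_⟩
    simp [g, (Submodule.Quotient.mk_eq_zero Y).mpr hy]
  have hker : LinearMap.ker g ≤ LinearMap.ker (W.mkQ ∘ₗ C.subtype) := by
    rintro ⟨c, hc⟩ hcY
    simp only [g, LinearMap.mem_ker, LinearMap.comp_apply, subtype_apply, mkQ_apply,
      Submodule.Quotient.mk_eq_zero] at hcY ⊢
    exact hC.2 ▸ ⟨hc, hcY⟩
  refine ⟨(LinearMap.ker g).liftQ _ hker ∘ₗ (g.quotKerEquivOfSurjective hg).symm, ?_⟩
  refine LinearMap.ext fun z ↦ ?_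
  obtain ⟨c, rfl⟩ := hg z
  rw [LinearMap.comp_apply, LinearMap.comp_apply, LinearEquiv.coe_coe,
    LinearMap.quotKerEquivOfSurjective_symm_apply, liftQ_apply]
  rfl

end Quotient

/-- Let `Y ⊆ U` be a submodule which is semisimple and of finite length as an `R`-module.
Then there is a smallest submodule `V ⊆ Y` such that the natural quotient map `U/V → U/Y`
admits an `R`-linear section. -/
theorem exists_smallest_submodule_quotMapHasSection
    {R U : Type*} [Ring R] [AddCommGroup U] [Module R U]
    (Y : Submodule R U) (hY : IsSemisimpleModule R Y) (hfin : IsFiniteLength R Y) :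
    ∃ (V : Submodule R U) (hV : V ≤ Y), QuotMapHasSection V Y hV ∧
      ∀ (W : Submodule R U) (hW : W ≤ Y), QuotMapHasSection W Y hW → V ≤ W := by
  have : IsArtinian R Y := (isFiniteLength_iff_isNoetherian_isArtinian.mp hfin).2
  have : WellFoundedLT (Set.Iic Y) := Y.mapIic.symm.strictMono.wellFoundedLT
  have : ComplementedLattice (Set.Iic Y) :=
    Y.mapIic.complementedLattice_iff.mp hY.toComplementedLattice
  obtain ⟨V, ⟨C, hC : IsComplAbove V Y C⟩, hV⟩ :=
    infClosed_setOf_isComplAbove.exists_isLeast_of_subset_Iic (fun _ ⟨_, hW⟩ ↦ hW.le)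
      ⟨Y, ⊤, top_sup_eq Y, top_inf_eq Y⟩
  exact ⟨V, hC.le, hC.quotMapHasSection, fun _ _ hW ↦ hV hW.exists_isComplAbove⟩
end
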